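/- arXiv:0811.2733 — 4 statements merged into one kernel-verified Lean document; each statement's English description precedes it below -/
import Mathlib

section
/- Let V : ℝ → ℝ be C¹ with Z_V := ∫_ℝ e^{−V(u)}du < ∞ and let ν be the probability measure Z_V^{−1}e^{−V(u)}du on ℝ. Assume ν satisfies a weak Poincaré inequality with rate function β. Let f : ℝ → ℝ be bounded and smooth with ν(f) = 0, and let (u_t)_{t≥0} be a family of bounded smooth functions with u_0 = f such that for all t ≥ 0: ν(u_t) = 0, ‖u_t‖_∞ ≤ ‖f‖_∞, and the map t ↦ ∫ u_t² dν is differentiable with derivative −2∫ (u_t')² dν (these properties hold for u_t = S_t f, where (S_t) is the Markov semigroup with generator L = d²/du² − V'·d/du, symmetric in L²(ν)). Then for all s, t > 0: ∫ u_t² dν ≤ e^{−2t/β(s)} ∫ f² dν + 4s(1 − e^{−2t/β(s)})‖f‖_∞². -/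
open MeasureTheory Real
open scoped BigOperators ENNReal

noncomputable section

/-- The normalisation constant `Z_V = ∫ e^{-V}`. -/
def ZV (V : ℝ → ℝ) : ℝ := ∫ u, Real.exp (-(V u))

/-- The probability measure `dν = Z_V⁻¹ e^{-V(u)} du` on `ℝ`. -/
def nuV (V : ℝ → ℝ) : Measure ℝ :=
  volume.withDensity fun u => ENNReal.ofReal (Real.exp (-(V u)) / ZV V)

/-- Variance of `f` under `μ`. -/
def var {X : Type*} [MeasurableSpace X] (μ : Measure X) (f : X → ℝ) : ℝ :=
  (∫ x, f x ^ 2 ∂μ) - (∫ x, f x ∂μ) ^ 2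

/-- The oscillation `Osc(f) = sup f - inf f`. -/
def osc {X : Type*} (f : X → ℝ) : ℝ := (⨆ x, f x) - ⨅ x, f x

/-- The sup norm `‖f‖_∞`. -/
def supNorm {X : Type*} (f : X → ℝ) : ℝ := ⨆ x, |f x|

/-- Bounded smooth function on `ℝ`. -/
def BddSmooth (f : ℝ → ℝ) : Prop := ContDiff ℝ (⊤ : ℕ∞) f ∧ ∃ M, ∀ x, |f x| ≤ M

/-- `ν` satisfies the weak Poincaré inequality with rate function `β`. -/
def WeakPoincare (ν : Measure ℝ) (β : ℝ → ℝ) : Prop :=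
  ∀ f : ℝ → ℝ, BddSmooth f → ∀ s : ℝ, 0 < s →
    var ν f ≤ β s * (∫ x, (deriv f x) ^ 2 ∂ν) + s * (osc f) ^ 2

lemma my_integrable_of_bdd (ν : Measure ℝ) [IsFiniteMeasure ν] (g : ℝ → ℝ)
    (hg : Continuous g) (C : ℝ) (hC : ∀ x, |g x| ≤ C) : Integrable g ν := by
  refine Integrable.mono' (integrable_const C) hg.aestronglyMeasurable
    (Filter.Eventually.of_forall fun x => ?_)
  simpa using hC x

lemma osc_sq_le {g : ℝ → ℝ} {M : ℝ} (hM : ∀ x, |g x| ≤ M) : (osc g) ^ 2 ≤ 4 * M ^ 2 := by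
  have hub : ∀ x, g x ≤ M := fun x => (abs_le.1 (hM x)).2
  have hlb : ∀ x, -M ≤ g x := fun x => (abs_le.1 (hM x)).1
  have hba : BddAbove (Set.range g) := ⟨M, by rintro y ⟨x, rfl⟩; exact hub x⟩
  have hbb : BddBelow (Set.range g) := ⟨-M, by rintro y ⟨x, rfl⟩; exact hlb x⟩
  have hsup : (⨆ x, g x) ≤ M := ciSup_le hub
  have hinf : -M ≤ ⨅ x, g x := le_ciInf hlb
  have h0 : 0 ≤ osc g := by
    have h1 : (⨅ x, g x) ≤ g 0 := ciInf_le hbb 0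
    have h2 : g 0 ≤ ⨆ x, g x := le_ciSup hba 0
    unfold osc; linarith
  have h2M : osc g ≤ 2 * M := by unfold osc; linarith
  calc (osc g) ^ 2 ≤ (2 * M) ^ 2 := pow_le_pow_left₀ h0 h2M 2
    _ = 4 * M ^ 2 := by ring

/-- WP forces β nonneg. -/
lemma beta_nonneg (ν : Measure ℝ) [IsProbabilityMeasure ν] (β : ℝ → ℝ)
    (hWP : WeakPoincare ν β) (s : ℝ) (hs : 0 < s) : 0 ≤ β s := by
  by_contra hb
  push_neg at hb
  set b := β s with hbdef
  set k : ℝ := Real.sqrt ((2 + 8 * s) / (-b)) + 1 with hk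
  have hx0 : 0 ≤ (2 + 8 * s) / (-b) := div_nonneg (by linarith) (by linarith)
  have hk2 : (2 + 8 * s) / (-b) < k ^ 2 := by
    have h1 : Real.sqrt ((2 + 8 * s) / (-b)) ^ 2 = (2 + 8 * s) / (-b) := Real.sq_sqrt hx0
    have h2 : 0 ≤ Real.sqrt ((2 + 8 * s) / (-b)) := Real.sqrt_nonneg _
    nlinarith
  set f1 : ℝ → ℝ := fun x => Real.sin (k * x) with hf1
  set f2 : ℝ → ℝ := fun x => Real.cos (k * x) with hf2
  have hsm1 : BddSmooth f1 := by
    refine ⟨Real.contDiff_sin.comp (contDiff_const.mul contDiff_id), 1, fun x => ?_⟩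
    exact abs_le.2 ⟨Real.neg_one_le_sin _, Real.sin_le_one _⟩
  have hsm2 : BddSmooth f2 := by
    refine ⟨Real.contDiff_cos.comp (contDiff_const.mul contDiff_id), 1, fun x => ?_⟩
    exact abs_le.2 ⟨Real.neg_one_le_cos _, Real.cos_le_one _⟩
  have hd1 : deriv f1 = fun x => Real.cos (k * x) * k := by
    funext x
    have : HasDerivAt f1 (Real.cos (k * x) * k) x := by
      simpa [Function.comp_def, hf1] using (Real.hasDerivAt_sin (k * x)).comp x ((hasDerivAt_id x).const_mul k)
    exact this.deriv
  have hd2 : deriv f2 = fun x => -Real.sin (k * x) * k := by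
    funext x
    have : HasDerivAt f2 (-Real.sin (k * x) * k) x := by
      simpa [Function.comp_def, hf2] using (Real.hasDerivAt_cos (k * x)).comp x ((hasDerivAt_id x).const_mul k)
    exact this.deriv
  have hint1 : Integrable (fun x => (Real.cos (k * x) * k) ^ 2) ν := by
    refine my_integrable_of_bdd ν _ (((Real.continuous_cos.comp (continuous_const.mul continuous_id)).mul continuous_const).pow 2) (k ^ 2) fun x => ?_
    rw [abs_pow]
    calc |Real.cos (k * x) * k| ^ 2 = |Real.cos (k * x)| ^ 2 * |k| ^ 2 := by
          rw [abs_mul]; ring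
      _ ≤ 1 * |k| ^ 2 := by
          have h1 : |Real.cos (k*x)| ^ 2 ≤ 1 := by
            simpa using pow_le_pow_left₀ (abs_nonneg _) (Real.abs_cos_le_one (k*x)) 2
          exact mul_le_mul_of_nonneg_right h1 (sq_nonneg _)
      _ = k ^ 2 := by rw [one_mul, sq_abs]
  have hint2 : Integrable (fun x => (-Real.sin (k * x) * k) ^ 2) ν := by
    refine my_integrable_of_bdd ν _ ((((Real.continuous_sin.comp (continuous_const.mul continuous_id)).neg).mul continuous_const).pow 2) (k ^ 2) fun x => ?_
    rw [abs_pow]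
    calc |(-Real.sin (k * x)) * k| ^ 2 = |Real.sin (k * x)| ^ 2 * |k| ^ 2 := by
          rw [abs_mul, abs_neg]; ring
      _ ≤ 1 * |k| ^ 2 := by
          have h1 : |Real.sin (k*x)| ^ 2 ≤ 1 := by
            simpa using pow_le_pow_left₀ (abs_nonneg _) (Real.abs_sin_le_one (k*x)) 2
          exact mul_le_mul_of_nonneg_right h1 (sq_nonneg _)
      _ = k ^ 2 := by rw [one_mul, sq_abs]
  have hsum : (∫ x, (deriv f1 x) ^ 2 ∂ν) + (∫ x, (deriv f2 x) ^ 2 ∂ν) = k ^ 2 := by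
    rw [hd1, hd2, ← integral_add hint1 hint2]
    have : ∀ x, (Real.cos (k * x) * k) ^ 2 + (-Real.sin (k * x) * k) ^ 2 = k ^ 2 := by
      intro x
      have := Real.sin_sq_add_cos_sq (k * x)
      nlinarith
    simp_rw [this]
    simp
  -- variance lower bounds
  have hvar : ∀ g : ℝ → ℝ, Continuous g → (∀ x, |g x| ≤ 1) → -1 ≤ var ν g := by
    intro g hg hb1
    have hig : Integrable g ν := my_integrable_of_bdd ν g hg 1 hb1
    have h1 : |∫ x, g x ∂ν| ≤ 1 := by
      calc |∫ x, g x ∂ν| ≤ ∫ x, |g x| ∂ν := by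
            simpa using norm_integral_le_integral_norm (μ := ν) g
        _ ≤ ∫ x, (1 : ℝ) ∂ν := integral_mono hig.abs (integrable_const 1) hb1
        _ = 1 := by simp
    have h2 : (∫ x, g x ∂ν) ^ 2 ≤ 1 := by
      rw [← sq_abs]; nlinarith [abs_nonneg (∫ x, g x ∂ν)]
    have h3 : 0 ≤ ∫ x, g x ^ 2 ∂ν := integral_nonneg fun x => sq_nonneg _
    unfold var; linarith
  have hv1 : -1 ≤ var ν f1 := hvar f1 (Real.continuous_sin.comp (continuous_const.mul continuous_id))
      (fun x => abs_le.2 ⟨Real.neg_one_le_sin _, Real.sin_le_one _⟩)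
  have hv2 : -1 ≤ var ν f2 := hvar f2 (Real.continuous_cos.comp (continuous_const.mul continuous_id))
      (fun x => abs_le.2 ⟨Real.neg_one_le_cos _, Real.cos_le_one _⟩)
  have hosc1 : (osc f1) ^ 2 ≤ 4 := by
    have := osc_sq_le (g := f1) (M := 1)
      (fun x => abs_le.2 ⟨Real.neg_one_le_sin _, Real.sin_le_one _⟩)
    simpa using this
  have hosc2 : (osc f2) ^ 2 ≤ 4 := by
    have := osc_sq_le (g := f2) (M := 1)
      (fun x => abs_le.2 ⟨Real.neg_one_le_cos _, Real.cos_le_one _⟩)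
    simpa using this
  have hW1 := hWP f1 hsm1 s hs
  have hW2 := hWP f2 hsm2 s hs
  have hI1 : 0 ≤ ∫ x, (deriv f1 x) ^ 2 ∂ν := integral_nonneg fun x => sq_nonneg _
  have hI2 : 0 ≤ ∫ x, (deriv f2 x) ^ 2 ∂ν := integral_nonneg fun x => sq_nonneg _
  -- combine
  have hmul : 2 + 8 * s < k ^ 2 * (-b) := (div_lt_iff₀ (by linarith)).1 hk2
  nlinarith [hW1, hW2, hsum, hI1, hI2,
    mul_le_mul_of_nonpos_left hosc1 (le_of_lt hb),
    mul_le_mul_of_nonneg_left hosc1 hs.le,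
    mul_le_mul_of_nonneg_left hosc2 hs.le]


/-- Decay to equilibrium from a weak Poincaré inequality, for a family
`u_t` having the properties of `S_t f` for the semigroup with generator
`L = d²/du² - V'·d/du` symmetric in `L²(ν)`. -/
theorem decay_from_weak_poincare
    (V : ℝ → ℝ) (hV : ContDiff ℝ 1 V)
    (hVint : Integrable fun u => Real.exp (-(V u)))
    (ν : Measure ℝ) (hν : ν = nuV V) (hνprob : IsProbabilityMeasure ν)
    (β : ℝ → ℝ) (hWP : WeakPoincare ν β)
    (f : ℝ → ℝ) (hf : BddSmooth f) (hfmean : ∫ x, f x ∂ν = 0)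
    (u : ℝ → ℝ → ℝ) (hu0 : u 0 = f)
    (husm : ∀ t : ℝ, 0 ≤ t → BddSmooth (u t))
    (humean : ∀ t : ℝ, 0 ≤ t → ∫ x, u t x ∂ν = 0)
    (hubdd : ∀ t : ℝ, 0 ≤ t → ∀ x, |u t x| ≤ supNorm f)
    (huderiv : ∀ t : ℝ, 0 ≤ t →
      HasDerivAt (fun τ => ∫ x, (u τ x) ^ 2 ∂ν)
        (-2 * ∫ x, (deriv (u t) x) ^ 2 ∂ν) t) :
    ∀ s : ℝ, 0 < s → ∀ t : ℝ, 0 < t →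
      (∫ x, (u t x) ^ 2 ∂ν) ≤
        Real.exp (-2 * t / β s) * (∫ x, f x ^ 2 ∂ν) +
          4 * s * (1 - Real.exp (-2 * t / β s)) * (supNorm f) ^ 2 := by
  intro s hs t ht
  have hβnn : 0 ≤ β s := beta_nonneg ν β hWP s hs
  set M := supNorm f with hM
  set φ : ℝ → ℝ := fun τ => ∫ x, (u τ x) ^ 2 ∂ν with hφ
  set I : ℝ → ℝ := fun τ => ∫ x, (deriv (u τ) x) ^ 2 ∂ν with hI
  have hInn : ∀ τ, 0 ≤ I τ := fun τ => integral_nonneg fun x => sq_nonneg _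
  have hvar : ∀ τ, 0 ≤ τ → var ν (u τ) = φ τ := by
    intro τ hτ
    have h1 : var ν (u τ) = (∫ x, (u τ x) ^ 2 ∂ν) - (∫ x, u τ x ∂ν) ^ 2 := rfl
    rw [h1, humean τ hτ]
    simp [hφ]
  have hoscb : ∀ τ, 0 ≤ τ → (osc (u τ)) ^ 2 ≤ 4 * M ^ 2 := fun τ hτ => osc_sq_le (hubdd τ hτ)
  have hkey : ∀ τ, 0 ≤ τ → φ τ - 4 * s * M ^ 2 ≤ β s * I τ := by
    intro τ hτ
    have hw := hWP (u τ) (husm τ hτ) s hs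
    rw [hvar τ hτ] at hw
    have h2 := mul_le_mul_of_nonneg_left (hoscb τ hτ) hs.le
    nlinarith
  have hφ0 : φ 0 = ∫ x, f x ^ 2 ∂ν := by rw [hφ]; simp [hu0]
  rcases hβnn.lt_or_eq with hb | hb
  · -- 0 < β s
    set c : ℝ := 2 / β s with hc
    have hcpos : 0 < c := by positivity
    set B : ℝ := 4 * s * M ^ 2 with hB
    set g : ℝ → ℝ := fun τ => Real.exp (c * τ) * (φ τ - B) with hg
    have hgderiv : ∀ τ, 0 ≤ τ →
        HasDerivAt g (Real.exp (c * τ) * c * (φ τ - B) + Real.exp (c * τ) * (-2 * I τ)) τ := by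
      intro τ hτ
      have he : HasDerivAt (fun y => Real.exp (c * y)) (Real.exp (c * τ) * c) τ := by
        simpa [Function.comp_def] using (Real.hasDerivAt_exp (c * τ)).comp τ ((hasDerivAt_id τ).const_mul c)
      exact he.mul ((huderiv τ hτ).sub_const B)
    have hanti : AntitoneOn g (Set.Ici (0:ℝ)) := by
      apply antitoneOn_of_deriv_nonpos (convex_Ici 0)
      · intro τ hτ; exact (hgderiv τ hτ).continuousAt.continuousWithinAt
      · intro τ hτ
        rw [interior_Ici] at hτ
        exact (hgderiv τ (le_of_lt hτ)).differentiableAt.differentiableWithinAt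
      · intro τ hτ
        rw [interior_Ici] at hτ
        rw [(hgderiv τ (le_of_lt hτ)).deriv]
        have hkc : c * (φ τ - B) ≤ 2 * I τ := by
          have h1 := hkey τ (le_of_lt hτ)
          have h2 : c * (φ τ - B) ≤ c * (β s * I τ) :=
            mul_le_mul_of_nonneg_left h1 hcpos.le
          have h3 : c * (β s * I τ) = 2 * I τ := by
            rw [hc]; field_simp
          linarith
        have hEnn := (Real.exp_pos (c * τ)).le
        nlinarith
    have hg0 := hanti Set.self_mem_Ici (Set.mem_Ici.2 ht.le) ht.le
    have hg0' : Real.exp (c * t) * (φ t - B) ≤ φ 0 - B := by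
      have hz : g 0 = φ 0 - B := by rw [hg]; simp
      rw [hg] at hg0
      simpa [hz] using hg0
    set E : ℝ := Real.exp (-2 * t / β s) with hE
    have hEpos : 0 < E := Real.exp_pos _
    have hEmul : E * Real.exp (c * t) = 1 := by
      rw [hE, hc, ← Real.exp_add, show -2 * t / β s + 2 / β s * t = 0 by ring]
      exact Real.exp_zero
    have h5 : E * (Real.exp (c * t) * (φ t - B)) ≤ E * (φ 0 - B) :=
      mul_le_mul_of_nonneg_left hg0' hEpos.le
    have h6 : φ t - B ≤ E * (φ 0 - B) := by
      calc φ t - B = E * Real.exp (c * t) * (φ t - B) := by rw [hEmul]; ring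
        _ = E * (Real.exp (c * t) * (φ t - B)) := by ring
        _ ≤ E * (φ 0 - B) := h5
    calc φ t ≤ E * (φ 0 - B) + B := by linarith
      _ = E * φ 0 + B * (1 - E) := by ring
      _ = E * (∫ x, f x ^ 2 ∂ν) + 4 * s * (1 - E) * M ^ 2 := by rw [hφ0, hB]; ring
  · -- β s = 0
    have hanti : AntitoneOn φ (Set.Ici (0:ℝ)) := by
      apply antitoneOn_of_deriv_nonpos (convex_Ici 0)
      · intro τ hτ; exact (huderiv τ hτ).continuousAt.continuousWithinAt
      · intro τ hτ
        rw [interior_Ici] at hτ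
        exact (huderiv τ (le_of_lt hτ)).differentiableAt.differentiableWithinAt
      · intro τ hτ
        rw [interior_Ici] at hτ
        rw [(huderiv τ (le_of_lt hτ)).deriv]
        have := hInn τ
        linarith
    have h1 : φ t ≤ φ 0 := hanti Set.self_mem_Ici (Set.mem_Ici.2 ht.le) ht.le
    rw [← hb, div_zero, Real.exp_zero, ← hφ0]
    ring_nf
    linarith

end
end

section
/- Let ν be a probability measure on ℝ satisfying a weak Poincaré inequality with rate function β(s) = c·s^{−2/α} for some constants c > 0 and α > 0. Let (S_t)_{t≥0} be a family of linear operators on bounded smooth functions on ℝ such that S_0 = Id, S_{t+s} = S_t ∘ S_s, ‖S_t g‖_∞ ≤ ‖g‖_∞, ν(S_t g) = ν(g), and for every bounded smooth g the map t ↦ ∫ (S_t g − ν(g))² dν is differentiable with derivative −2∫ ((S_t g)')² dν. Then there exists a constant C = C(α, c) > 0 such that for every bounded smooth f and every t > 0: Var_ν(S_t f) ≤ C·t^{−α/2}·‖f − ν(f)‖_∞². -/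
open MeasureTheory Real
open scoped BigOperators ENNReal

noncomputable section

/-- The hypotheses on the family of linear operators `(S_t)_{t ≥ 0}` on bounded smooth
functions: `S_0 = Id`, semigroup property, contraction in sup norm, invariance of `ν`,
linearity, and differentiability of `t ↦ ∫ (S_t g - ν(g))² dν` with derivative
`-2∫ ((S_t g)')² dν`. -/
structure SemigroupHyp (ν : Measure ℝ) (S : ℝ → (ℝ → ℝ) → (ℝ → ℝ)) : Prop where
  stable : ∀ t : ℝ, 0 ≤ t → ∀ g, BddSmooth g → BddSmooth (S t g)
  idZero : ∀ g, BddSmooth g → S 0 g = g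
  semigroup : ∀ t s : ℝ, 0 ≤ t → 0 ≤ s → ∀ g, BddSmooth g → S (t + s) g = S t (S s g)
  contraction : ∀ t : ℝ, 0 ≤ t → ∀ g, BddSmooth g → ∀ x, |S t g x| ≤ supNorm g
  invariant : ∀ t : ℝ, 0 ≤ t → ∀ g, BddSmooth g → ∫ x, S t g x ∂ν = ∫ x, g x ∂ν
  linear : ∀ t : ℝ, 0 ≤ t → ∀ (a : ℝ) (g h : ℝ → ℝ), BddSmooth g → BddSmooth h →
    S t (fun y => a * g y + h y) = fun y => a * S t g y + S t h y
  l2deriv : ∀ g, BddSmooth g → ∀ t : ℝ, 0 ≤ t →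
    HasDerivAt (fun τ => ∫ x, (S τ g x - ∫ y, g y ∂ν) ^ 2 ∂ν)
      (-2 * ∫ x, (deriv (S t g) x) ^ 2 ∂ν) t

lemma integrable_of_bdd {ν : Measure ℝ} [IsFiniteMeasure ν] {h : ℝ → ℝ} {M : ℝ}
    (hc : Continuous h) (hb : ∀ x, |h x| ≤ M) : Integrable h ν :=
  ⟨hc.aestronglyMeasurable,
    MeasureTheory.HasFiniteIntegral.of_bounded (C := M) (Filter.Eventually.of_forall hb)⟩

lemma var_eq_integral_sq {ν : Measure ℝ} [IsProbabilityMeasure ν] {h : ℝ → ℝ} {M : ℝ}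
    (hc : Continuous h) (hb : ∀ x, |h x| ≤ M) :
    var ν h = ∫ x, (h x - ∫ y, h y ∂ν) ^ 2 ∂ν := by
  have hih : Integrable h ν := integrable_of_bdd hc hb
  have hih2 : Integrable (fun x => h x ^ 2) ν := by
    refine integrable_of_bdd (hc.pow 2) (M := M ^ 2) (fun x => ?_)
    rw [abs_pow]
    exact pow_le_pow_left₀ (abs_nonneg _) (hb x) 2
  set m := ∫ y, h y ∂ν with hm
  have e1 : ∫ x, (h x - m) ^ 2 ∂ν = ∫ x, (h x ^ 2 - 2 * m * h x + m ^ 2) ∂ν :=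
    integral_congr_ae (Filter.Eventually.of_forall fun x => by ring)
  have hsub : Integrable (fun x => h x ^ 2 - 2 * m * h x) ν := hih2.sub (hih.const_mul (2 * m))
  have hcm : Integrable (fun x => 2 * m * h x) ν := hih.const_mul (2 * m)
  rw [var, e1, integral_add hsub (integrable_const _),
    integral_sub hih2 hcm, integral_const_mul, integral_const]
  simp [← hm]
  ring

lemma osc_sq_le_s1 {h : ℝ → ℝ} {N : ℝ} (hb : ∀ x, |h x| ≤ N) : osc h ^ 2 ≤ 4 * N ^ 2 := by
  have hba : BddAbove (Set.range h) := ⟨N, by rintro _ ⟨x, rfl⟩; exact (abs_le.mp (hb x)).2⟩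
  have hbb : BddBelow (Set.range h) := ⟨-N, by rintro _ ⟨x, rfl⟩; exact (abs_le.mp (hb x)).1⟩
  have h1 : (⨆ x, h x) ≤ N := ciSup_le fun x => (abs_le.mp (hb x)).2
  have h2 : -N ≤ ⨅ x, h x := le_ciInf fun x => (abs_le.mp (hb x)).1
  have h3 : (⨅ x, h x) ≤ ⨆ x, h x := le_trans (ciInf_le hbb 0) (le_ciSup hba 0)
  have h4 : 0 ≤ osc h := by rw [osc]; linarith
  have h5 : osc h ≤ 2 * N := by rw [osc]; linarith
  nlinarith

/-- Polynomial decay to equilibrium under a weak Poincaré inequality with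
rate function `β(s) = c·s^{-2/α}` (the `κ`-concave case). -/
theorem polynomial_decay_from_weak_poincare (α c : ℝ) (hα : 0 < α) (hc : 0 < c) :
    ∃ C : ℝ, 0 < C ∧
      ∀ ν : Measure ℝ, IsProbabilityMeasure ν →
        WeakPoincare ν (fun s => c * s ^ (-(2 / α))) →
      ∀ S : ℝ → (ℝ → ℝ) → (ℝ → ℝ), SemigroupHyp ν S →
      ∀ f : ℝ → ℝ, BddSmooth f → ∀ t : ℝ, 0 < t →
        var ν (S t f) ≤
          C * t ^ (-(α / 2)) * (supNorm fun x => f x - ∫ y, f y ∂ν) ^ 2 := by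
  set ε : ℝ := 2 / α with hεdef
  set a : ℝ := α / 2 with hadef
  have hε : 0 < ε := by rw [hεdef]; positivity
  have ha : 0 < a := by rw [hadef]; positivity
  have hεa : ε * a = 1 := by rw [hεdef, hadef]; field_simp
  refine ⟨8 * (α * c / 2) ^ a, by positivity, ?_⟩
  intro ν hνp hWP S hS f hf t ht
  haveI := hνp
  obtain ⟨hfsm, Mf, hMf⟩ := id hf
  set m : ℝ := ∫ y, f y ∂ν with hm
  set g : ℝ → ℝ := fun x => f x - m with hgdef
  have hgb : ∀ x, |g x| ≤ Mf + |m| := by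
    intro x
    have h1 := abs_add_le (f x) (-m)
    rw [abs_neg] at h1
    have hgx : g x = f x + -m := by rw [hgdef]; ring
    rw [hgx]
    exact h1.trans (by linarith [hMf x])
  have hgsm : BddSmooth g := ⟨hfsm.sub contDiff_const, Mf + |m|, hgb⟩
  set N : ℝ := supNorm g with hNdef
  have hbddA : BddAbove (Set.range fun x => |g x|) :=
    ⟨Mf + |m|, by rintro _ ⟨x, rfl⟩; exact hgb x⟩
  have hNb : ∀ x, |g x| ≤ N := by
    intro x
    rw [hNdef]
    simp only [supNorm]
    exact le_ciSup hbddA x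
  have hN0 : 0 ≤ N := le_trans (abs_nonneg _) (hNb 0)
  have hif : Integrable f ν := integrable_of_bdd hfsm.continuous hMf
  have hg0 : ∫ x, g x ∂ν = 0 := by
    have h1 : ∫ x, g x ∂ν = ∫ x, (f x - m) ∂ν := by rw [hgdef]
    rw [h1, integral_sub hif (integrable_const m), integral_const]
    simp [← hm]
  set F : ℝ → ℝ := fun τ => ∫ x, (S τ g x - ∫ y, g y ∂ν) ^ 2 ∂ν with hFdef
  have hFeq : ∀ τ, F τ = ∫ x, (S τ g x) ^ 2 ∂ν := by
    intro τ; rw [hFdef]; simp only [hg0, sub_zero]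
  have hFnonneg : ∀ τ, 0 ≤ F τ := fun τ => by
    rw [hFeq]; exact integral_nonneg fun x => sq_nonneg _
  have hFd : ∀ τ : ℝ, 0 ≤ τ →
      HasDerivAt F (-2 * ∫ x, (deriv (S τ g) x) ^ 2 ∂ν) τ :=
    fun τ hτ => hS.l2deriv g hgsm τ hτ
  have hI : ∀ τ : ℝ, 0 ≤ ∫ x, (deriv (S τ g) x) ^ 2 ∂ν :=
    fun τ => integral_nonneg fun x => sq_nonneg _
  have hFanti : AntitoneOn F (Set.Icc 0 t) := by
    refine antitoneOn_of_deriv_nonpos (convex_Icc 0 t)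
      (fun τ hτ => (hFd τ hτ.1).continuousAt.continuousWithinAt) ?_ ?_
    · rw [interior_Icc]
      exact fun τ hτ => ((hFd τ hτ.1.le).differentiableAt).differentiableWithinAt
    · rw [interior_Icc]
      intro τ hτ
      rw [(hFd τ hτ.1.le).deriv]
      linarith [hI τ]
  -- identification var ν (S t f) = F t
  have hSf : BddSmooth (S t f) := hS.stable t ht.le f hf
  obtain ⟨hSfsm, MSf, hMSf⟩ := id hSf
  have hmSf : ∫ x, S t f x ∂ν = m := by
    rw [hS.invariant t ht.le f hf]
  have hv1 : var ν (S t f) = ∫ x, (S t f x - m) ^ 2 ∂ν := by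
    rw [var_eq_integral_sq hSfsm.continuous hMSf, hmSf]
  have honesm : BddSmooth (fun _ : ℝ => (1:ℝ)) := ⟨contDiff_const, 1, fun x => by norm_num⟩
  have hlin := hS.linear t ht.le m (fun _ => (1:ℝ)) g honesm hgsm
  have hfid : (fun y => m * (fun _ : ℝ => (1:ℝ)) y + g y) = f := by
    funext y; simp only [hgdef]; ring
  rw [hfid] at hlin
  have husm : BddSmooth (S t (fun _ : ℝ => (1:ℝ))) := hS.stable t ht.le _ honesm
  have hsn1 : supNorm (fun _ : ℝ => (1:ℝ)) = 1 := by simp [supNorm]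
  have hub : ∀ x, |S t (fun _ : ℝ => (1:ℝ)) x| ≤ 1 := fun x => by
    have h1 := hS.contraction t ht.le _ honesm x
    rwa [hsn1] at h1
  have hiu : Integrable (S t (fun _ : ℝ => (1:ℝ))) ν := integrable_of_bdd husm.1.continuous hub
  have hintu : ∫ x, S t (fun _ : ℝ => (1:ℝ)) x ∂ν = 1 := by
    rw [hS.invariant t ht.le _ honesm]; simp
  have haeu : (fun x => S t (fun _ : ℝ => (1:ℝ)) x) =ᵐ[ν] fun _ => (1:ℝ) := by
    have hnn : 0 ≤ fun x => 1 - S t (fun _ : ℝ => (1:ℝ)) x :=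
      Pi.le_def.mpr fun x => by
        have h2 := (abs_le.mp (hub x)).2
        simp only [Pi.zero_apply]
        linarith
    have hint0 : ∫ x, (1 - S t (fun _ : ℝ => (1:ℝ)) x) ∂ν = 0 := by
      rw [integral_sub (integrable_const 1) hiu, hintu]; simp
    have h0 := (integral_eq_zero_iff_of_nonneg hnn ((integrable_const 1).sub hiu)).mp hint0
    filter_upwards [h0] with x hx
    have h3 : (1:ℝ) - S t (fun _ : ℝ => (1:ℝ)) x = 0 := hx
    linarith
  have haef : (fun x => (S t f x - m) ^ 2) =ᵐ[ν] fun x => (S t g x) ^ 2 := by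
    filter_upwards [haeu] with x hx
    have h1 : S t f x = m * S t (fun _ : ℝ => (1:ℝ)) x + S t g x := congrFun hlin x
    have h2 : S t (fun _ : ℝ => (1:ℝ)) x = 1 := hx
    simp only [h1, h2]
    ring
  have hvarF : var ν (S t f) = F t := by
    rw [hv1, integral_congr_ae haef, hFeq t]
  by_cases hFt : 0 < F t
  swap
  · rw [hvarF]
    have h1 : F t = 0 := le_antisymm (not_lt.mp hFt) (hFnonneg t)
    rw [h1]
    have h2 : (0:ℝ) < t ^ (-a) := Real.rpow_pos_of_pos ht _
    have h3 : (0:ℝ) < (α * c / 2) ^ a := Real.rpow_pos_of_pos (by positivity) _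
    positivity
  have hNpos : 0 < N := by
    rcases hN0.lt_or_eq with h | h
    · exact h
    · exfalso
      have hz : ∀ x, S t g x = 0 := by
        intro x
        have h1 := hS.contraction t ht.le g hgsm x
        rw [← hNdef, ← h] at h1
        exact abs_eq_zero.mp (le_antisymm h1 (abs_nonneg _))
      have : F t = 0 := by
        rw [hFeq t]
        simp [hz]
      linarith
  have hFpos : ∀ τ ∈ Set.Icc (0:ℝ) t, 0 < F τ := fun τ hτ =>
    lt_of_lt_of_le hFt (hFanti hτ (Set.right_mem_Icc.mpr ht.le) hτ.2)
  set A : ℝ := (8 * N ^ 2) ^ ε with hAdef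
  have h8N : (0:ℝ) < 8 * N ^ 2 := by positivity
  have hA : 0 < A := Real.rpow_pos_of_pos h8N ε
  set D : ℝ := ε / (c * A) with hDdef
  have hD : 0 < D := by rw [hDdef]; positivity
  have hkey : ∀ τ ∈ Set.Icc (0:ℝ) t,
      0 ≤ (-2 * ∫ x, (deriv (S τ g) x) ^ 2 ∂ν) * (-ε) * F τ ^ (-ε - 1) - D := by
    intro τ hτ
    set Iτ := ∫ x, (deriv (S τ g) x) ^ 2 ∂ν with hIτdef
    have hFτ : 0 < F τ := hFpos τ hτ
    set s : ℝ := F τ / (8 * N ^ 2) with hsdef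
    have hs : 0 < s := by rw [hsdef]; positivity
    have hSgsm : BddSmooth (S τ g) := hS.stable τ hτ.1 g hgsm
    have hSgb : ∀ x, |S τ g x| ≤ N := fun x => by
      have h1 := hS.contraction τ hτ.1 g hgsm x
      rwa [← hNdef] at h1
    have hintSg : ∫ x, S τ g x ∂ν = 0 := by rw [hS.invariant τ hτ.1 g hgsm, hg0]
    have hvar : var ν (S τ g) = F τ := by
      rw [var_eq_integral_sq hSgsm.1.continuous hSgb, hintSg, hFeq τ]
      simp
    have hwp : F τ ≤ c * s ^ (-ε) * Iτ + s * osc (S τ g) ^ 2 := by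
      have h1 := hWP (S τ g) hSgsm s hs
      rw [hvar] at h1
      exact h1
    have hosc : osc (S τ g) ^ 2 ≤ 4 * N ^ 2 := osc_sq_le_s1 hSgb
    have hso : s * osc (S τ g) ^ 2 ≤ F τ / 2 := by
      have h1 : s * osc (S τ g) ^ 2 ≤ s * (4 * N ^ 2) :=
        mul_le_mul_of_nonneg_left hosc hs.le
      have h2 : s * (4 * N ^ 2) = F τ / 2 := by rw [hsdef]; field_simp; ring
      linarith
    have hsε : 0 < s ^ ε := Real.rpow_pos_of_pos hs ε
    have h2 : F τ / 2 ≤ c * s ^ (-ε) * Iτ := by linarith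
    have h3 := mul_le_mul_of_nonneg_right h2 hsε.le
    have h4 : c * s ^ (-ε) * Iτ * s ^ ε = c * Iτ := by
      have h5 : s ^ (-ε) * s ^ ε = 1 := by
        rw [← Real.rpow_add hs]; simp
      calc c * s ^ (-ε) * Iτ * s ^ ε = c * Iτ * (s ^ (-ε) * s ^ ε) := by ring
      _ = c * Iτ := by rw [h5]; ring
    rw [h4] at h3
    have hb : 0 < F τ ^ (-ε - 1) := Real.rpow_pos_of_pos hFτ _
    have hsεval : s ^ ε = F τ ^ ε / A := by
      rw [hsdef, hAdef, Real.div_rpow hFτ.le h8N.le]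
    have e1 : F τ * (F τ ^ ε * F τ ^ (-ε - 1)) = 1 := by
      nth_rewrite 1 [← Real.rpow_one (F τ)]
      rw [← Real.rpow_add hFτ, ← Real.rpow_add hFτ,
        show (1:ℝ) + (ε + (-ε - 1)) = 0 by ring, Real.rpow_zero]
    have h5 := mul_le_mul_of_nonneg_right h3 hb.le
    have h6 : F τ / 2 * s ^ ε * F τ ^ (-ε - 1) = A⁻¹ / 2 := by
      rw [hsεval]
      field_simp
      linear_combination e1
    have h5' : A⁻¹ / 2 ≤ c * Iτ * F τ ^ (-ε - 1) := by rw [← h6]; exact h5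
    rw [hDdef]
    have h7 : ε / (c * A) ≤ 2 * ε * (Iτ * F τ ^ (-ε - 1)) := by
      have h8 := mul_le_mul_of_nonneg_left h5' (show (0:ℝ) ≤ 2 * ε / c by positivity)
      have l1 : 2 * ε / c * (A⁻¹ / 2) = ε / (c * A) := by field_simp
      have l2 : 2 * ε / c * (c * Iτ * F τ ^ (-ε - 1)) = 2 * ε * (Iτ * F τ ^ (-ε - 1)) := by
        field_simp
      rw [l1, l2] at h8
      exact h8
    have h9 : (-2 * Iτ) * (-ε) * F τ ^ (-ε - 1) = 2 * ε * (Iτ * F τ ^ (-ε - 1)) := by ring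
    linarith [h7, h9]
  set H : ℝ → ℝ := fun τ => F τ ^ (-ε) - τ * D with hHdef
  have hHd : ∀ τ ∈ Set.Icc (0:ℝ) t,
      HasDerivAt H ((-2 * ∫ x, (deriv (S τ g) x) ^ 2 ∂ν) * (-ε) * F τ ^ (-ε - 1) - D) τ :=
    fun τ hτ =>
      ((hFd τ hτ.1).rpow_const (Or.inl (hFpos τ hτ).ne')).sub (hasDerivAt_mul_const D)
  have hHmono : MonotoneOn H (Set.Icc 0 t) := by
    refine monotoneOn_of_deriv_nonneg (convex_Icc 0 t)
      (fun τ hτ => (hHd τ hτ).continuousAt.continuousWithinAt) ?_ ?_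
    · rw [interior_Icc]
      exact fun τ hτ =>
        (hHd τ (Set.mem_Icc_of_Ioo hτ)).differentiableAt.differentiableWithinAt
    · rw [interior_Icc]
      intro τ hτ
      rw [(hHd τ (Set.mem_Icc_of_Ioo hτ)).deriv]
      exact hkey τ (Set.mem_Icc_of_Ioo hτ)
  have hH0t := hHmono (Set.left_mem_Icc.mpr ht.le) (Set.right_mem_Icc.mpr ht.le) ht.le
  have e0 : H 0 = F 0 ^ (-ε) := by simp [hHdef]
  have et : H t = F t ^ (-ε) - t * D := by simp only [hHdef]
  have hH0 : 0 ≤ H 0 := by rw [e0]; exact Real.rpow_nonneg (hFnonneg 0) _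
  have htD : t * D ≤ F t ^ (-ε) := by
    rw [et] at hH0t
    linarith
  have hFtε : 0 < F t ^ ε := Real.rpow_pos_of_pos hFt ε
  have hrw : F t ^ (-ε) = (F t ^ ε)⁻¹ := Real.rpow_neg hFt.le ε
  have h9 : F t ^ ε ≤ (t * D)⁻¹ := by
    rw [hrw] at htD
    exact (le_inv_comm₀ (by positivity) hFtε).mp htD
  have h10 : F t ≤ ((t * D)⁻¹) ^ a := by
    have h11 := Real.rpow_le_rpow (Real.rpow_nonneg hFt.le ε) h9 ha.le
    rwa [← Real.rpow_mul hFt.le, hεa, Real.rpow_one] at h11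
  have h11 : ((t * D)⁻¹ : ℝ) ^ a = 8 * (α * c / 2) ^ a * t ^ (-a) * N ^ 2 := by
    have hinv : (t * D)⁻¹ = c * A / (t * ε) := by
      rw [hDdef]; field_simp
    rw [hinv, Real.div_rpow (by positivity) (by positivity),
      Real.mul_rpow hc.le hA.le, Real.mul_rpow ht.le hε.le,
      hAdef, ← Real.rpow_mul h8N.le, hεa, Real.rpow_one,
      Real.rpow_neg ht.le]
    have hac : (α * c / 2 : ℝ) = c / ε := by rw [hεdef]; field_simp
    rw [hac, Real.div_rpow hc.le hε.le]
    have hεa' : 0 < ε ^ a := Real.rpow_pos_of_pos hε a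
    have hta : 0 < t ^ a := Real.rpow_pos_of_pos ht a
    field_simp
  rw [hvarF]
  rw [← h11]
  exact h10


end
end

section
/- (Geometric bisection lemma.) Fix d ≥ 1 and ε ∈ (0,1). Set l_k := (2−ε)^{k/d}, s_k := ⌊l_k^{1/3}⌋ and δ_k := (ε/4)√(l_k). Let 𝔽_k be the collection of finite rectangles of ℤ^d (products of integer intervals) which, modulo translations and permutations of the coordinates, are contained in ([0,l_{k+1}] × ⋯ × [0,l_{k+d}]) ∩ ℤ^d. Then for every k ∈ ℤ_+ and every Λ ∈ 𝔽_k ∖ 𝔽_{k−1}, there exists a finite sequence of pairs (Λ₁^{(i)}, Λ₂^{(i)})_{i=1,…,s_k} of rectangles in 𝔽_{k−1} such that: (i) Λ = Λ₁^{(i)} ∪ Λ₂^{(i)} for each i; (ii) d(Λ∖Λ₁^{(i)}, Λ∖Λ₂^{(i)}) ≥ δ_k for each i, where d is the Euclidean distance on ℤ^d; (iii) (Λ₁^{(i)} ∩ Λ₂^{(i)}) ∩ (Λ₁^{(j)} ∩ Λ₂^{(j)}) = ∅ whenever i ≠ j. -/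
open scoped BigOperators

noncomputable section

/-- Sites of the lattice `ℤ^d`. -/
abbrev Site (d : ℕ) := Fin d → ℤ

/-- Euclidean distance between two sites of `ℤ^d`. -/
def euclDist {d : ℕ} (x y : Site d) : ℝ :=
  Real.sqrt (∑ i, ((x i : ℝ) - (y i : ℝ)) ^ 2)

/-- A (finite) rectangle of `ℤ^d`: a product of integer intervals. -/
def IsRect {d : ℕ} (Λ : Finset (Site d)) : Prop :=
  ∃ a b : Fin d → ℤ, Λ = Fintype.piFinset fun i => Finset.Icc (a i) (b i)

/-- The side lengths `l_k := (2-ε)^{k/d}`. -/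
def sidel (d : ℕ) (ε : ℝ) (k : ℕ) : ℝ := (2 - ε) ^ ((k : ℝ) / d)

/-- Membership in the family `𝔽_k`: `Λ` is a rectangle which, modulo translations and
permutations of the coordinates, is contained in `[0, l_{k+1}] × ⋯ × [0, l_{k+d}]`. -/
def memF (d : ℕ) (ε : ℝ) (k : ℕ) (Λ : Finset (Site d)) : Prop :=
  IsRect Λ ∧ ∃ (π : Equiv.Perm (Fin d)) (v : Fin d → ℤ),
    ∀ x ∈ Λ, ∀ i : Fin d,
      (0 : ℤ) ≤ x (π i) + v i ∧
      ((x (π i) + v i : ℤ) : ℝ) ≤ sidel d ε (k + 1 + (i : ℕ))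

/-- The number of pairs `s_k := ⌊l_k^{1/3}⌋`. -/
def sk (d : ℕ) (ε : ℝ) (k : ℕ) : ℕ := ⌊(sidel d ε k) ^ ((1 : ℝ) / 3)⌋₊

/-- The overlap width `δ_k := (ε/4)·√(l_k)`. -/
def deltak (d : ℕ) (ε : ℝ) (k : ℕ) : ℝ := ε / 4 * Real.sqrt (sidel d ε k)

/-! ### Auxiliary lemmas -/

lemma euclDist_coord_le {d : ℕ} (x y : Site d) (j : Fin d) :
    |((x j : ℝ)) - ((y j : ℝ))| ≤ euclDist x y := by
  rw [euclDist, ← Real.sqrt_sq_eq_abs]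
  apply Real.sqrt_le_sqrt
  exact Finset.single_le_sum (f := fun i => ((x i : ℝ) - (y i : ℝ)) ^ 2)
    (fun i _ => sq_nonneg _) (Finset.mem_univ j)

lemma rect_filter_le {d : ℕ} (a b : Fin d → ℤ) (j0 : Fin d) (t : ℤ) :
    ((Fintype.piFinset fun i => Finset.Icc (a i) (b i)).filter fun x => x j0 ≤ t)
      = Fintype.piFinset fun i => Finset.Icc (a i) (if i = j0 then min (b i) t else b i) := by
  ext x
  simp only [Finset.mem_filter, Fintype.mem_piFinset, Finset.mem_Icc]
  constructor
  · rintro ⟨h, hxt⟩ i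
    by_cases hi : i = j0
    · subst hi; simp only [if_pos rfl]; exact ⟨(h i).1, le_min (h i).2 hxt⟩
    · simp only [if_neg hi]; exact h i
  · intro h
    have hj := h j0
    simp only [if_pos rfl] at hj
    refine ⟨fun i => ?_, le_trans hj.2 (min_le_right _ _)⟩
    by_cases hi : i = j0
    · subst hi; exact ⟨hj.1, le_trans hj.2 (min_le_left _ _)⟩
    · have hh := h i; simp only [if_neg hi] at hh; exact hh

lemma rect_filter_ge {d : ℕ} (a b : Fin d → ℤ) (j0 : Fin d) (u : ℤ) :
    ((Fintype.piFinset fun i => Finset.Icc (a i) (b i)).filter fun x => u ≤ x j0)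
      = Fintype.piFinset fun i => Finset.Icc (if i = j0 then max (a i) u else a i) (b i) := by
  ext x
  simp only [Finset.mem_filter, Fintype.mem_piFinset, Finset.mem_Icc]
  constructor
  · rintro ⟨h, hxt⟩ i
    by_cases hi : i = j0
    · subst hi; simp only [if_pos rfl]; exact ⟨max_le (h i).1 hxt, (h i).2⟩
    · simp only [if_neg hi]; exact h i
  · intro h
    have hj := h j0
    simp only [if_pos rfl] at hj
    refine ⟨fun i => ?_, le_trans (le_max_right _ _) hj.1⟩
    by_cases hi : i = j0
    · subst hi; exact ⟨le_trans (le_max_left _ _) hj.1, hj.2⟩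
    · have hh := h i; simp only [if_neg hi] at hh; exact hh

/-- geometric bisection lemma.  Every rectangle in `𝔽_k ∖ 𝔽_{k-1}` can
be written, in `s_k` different ways with pairwise disjoint overlaps, as a slightly
overlapping union of two rectangles of `𝔽_{k-1}`, the overlap being of width at least
`δ_k`. -/
theorem geometric_bisection
    (d : ℕ) (hd : 1 ≤ d) (ε : ℝ) (hε0 : 0 < ε) (hε1 : ε < 1)
    (k : ℕ) (hk : 1 ≤ k)
    (Λ : Finset (Site d)) (hΛ : memF d ε k Λ) (hΛ' : ¬ memF d ε (k - 1) Λ) :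
    ∃ Λ₁ Λ₂ : Fin (sk d ε k) → Finset (Site d),
      (∀ i, memF d ε (k - 1) (Λ₁ i) ∧ memF d ε (k - 1) (Λ₂ i)) ∧
      (∀ i, Λ = Λ₁ i ∪ Λ₂ i) ∧
      (∀ i, ∀ x ∈ Λ \ Λ₁ i, ∀ y ∈ Λ \ Λ₂ i, deltak d ε k ≤ euclDist x y) ∧
      (∀ i j, i ≠ j → (Λ₁ i ∩ Λ₂ i) ∩ (Λ₁ j ∩ Λ₂ j) = ∅) := by
  -- destruct d = d'+1, k = k'+1
  obtain ⟨d', rfl⟩ : ∃ d', d = d' + 1 := ⟨d - 1, by omega⟩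
  obtain ⟨k', rfl⟩ : ∃ k', k = k' + 1 := ⟨k - 1, by omega⟩
  simp only [Nat.add_sub_cancel] at hΛ' ⊢
  have h2ε : (1 : ℝ) < 2 - ε := by linarith
  have hl1 : (1 : ℝ) ≤ sidel (d' + 1) ε (k' + 1) :=
    Real.one_le_rpow h2ε.le (by positivity)
  have hl0 : (0 : ℝ) < sidel (d' + 1) ε (k' + 1) := by linarith
  have hδ : 0 < deltak (d' + 1) ε (k' + 1) := by
    rw [deltak]
    exact mul_pos (by linarith) (Real.sqrt_pos.mpr hl0)
  -- empty case
  rcases Finset.eq_empty_or_nonempty Λ with hΛe | hne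
  · exfalso
    apply hΛ'
    refine ⟨⟨fun _ => 1, fun _ => 0, ?_⟩, 1, fun _ => 0, ?_⟩
    · have h0 : (Fintype.piFinset fun _ : Fin (d' + 1) => Finset.Icc (1 : ℤ) 0) = ∅ := by
        rw [Finset.eq_empty_iff_forall_notMem]
        intro x hx
        have := Fintype.mem_piFinset.mp hx 0
        simp only [Finset.mem_Icc] at this
        omega
      rw [hΛe, h0]
    · intro x hx
      rw [hΛe] at hx
      exact absurd hx (Finset.notMem_empty x)
  obtain ⟨⟨a, b, hab⟩, π, v, hbox⟩ := hΛ
  have hmem : ∀ x : Site (d' + 1), x ∈ Λ ↔ ∀ i, a i ≤ x i ∧ x i ≤ b i := by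
    intro x
    rw [hab]
    simp [Fintype.mem_piFinset, Finset.mem_Icc]
  obtain ⟨x0, hx0⟩ := hne
  have hab' : ∀ i, a i ≤ b i := fun i =>
    le_trans ((hmem x0).mp hx0 i).1 ((hmem x0).mp hx0 i).2
  have haΛ : a ∈ Λ := (hmem a).mpr fun i => ⟨le_refl _, hab' i⟩
  have hbΛ : b ∈ Λ := (hmem b).mpr fun i => ⟨hab' i, le_refl _⟩
  set j0 : Fin (d' + 1) := π (Fin.last d') with hj0
  -- the side-length identity
  have hsidel : sidel (d' + 1) ε (k' + 1 + 1 + d') = (2 - ε) * sidel (d' + 1) ε (k' + 1) := by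
    have hidx : (k' + 1 + 1 + d' : ℕ) = (k' + 1) + (d' + 1) := by omega
    rw [hidx, sidel, sidel]
    have hd0 : ((d' + 1 : ℕ) : ℝ) ≠ 0 := by positivity
    have hcast : (((k' + 1) + (d' + 1) : ℕ) : ℝ) = ((k' + 1 : ℕ) : ℝ) + ((d' + 1 : ℕ) : ℝ) := by
      push_cast; ring
    rw [hcast, add_div, div_self hd0]
    rw [Real.rpow_add (by linarith) , Real.rpow_one]
    ring
  -- the bound on the longest side
  have hba : ((b j0 : ℤ) : ℝ) - ((a j0 : ℤ) : ℝ) ≤ (2 - ε) * sidel (d' + 1) ε (k' + 1) := by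
    have h1 := (hbox b hbΛ (Fin.last d')).2
    have h2 := (hbox a haΛ (Fin.last d')).1
    rw [Fin.val_last] at h1
    rw [hsidel] at h1
    have h2' : (0 : ℝ) ≤ ((a j0 + v (Fin.last d') : ℤ) : ℝ) := by exact_mod_cast h2
    push_cast at h1 h2' ⊢
    linarith
  set S : ℕ := sk (d' + 1) ε (k' + 1) with hS
  set g : ℤ := ⌈deltak (d' + 1) ε (k' + 1)⌉ with hgdef
  have hg1 : 1 ≤ g := Int.ceil_pos.mpr hδ
  have hgδ : deltak (d' + 1) ε (k' + 1) ≤ (g : ℝ) := Int.le_ceil _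
  have hSle : (S : ℝ) ≤ sidel (d' + 1) ε (k' + 1) ^ ((1 : ℝ) / 3) := by
    rw [hS, sk]
    exact Nat.floor_le (Real.rpow_nonneg hl0.le _)
  have hSg : (S : ℝ) * ((g : ℝ) - 1) ≤ ε / 4 * sidel (d' + 1) ε (k' + 1) := by
    by_cases hgc : g ≤ 1
    · have hgle : (g : ℝ) - 1 ≤ 0 := by
        have : (g : ℝ) ≤ 1 := by exact_mod_cast hgc
        linarith
      have := mul_nonpos_of_nonneg_of_nonpos (Nat.cast_nonneg S) hgle
      have hpos : (0:ℝ) ≤ ε / 4 * sidel (d' + 1) ε (k' + 1) := by positivity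
      linarith
    · push_neg at hgc
      have hδ1 : 1 < deltak (d' + 1) ε (k' + 1) := by
        by_contra h
        push_neg at h
        have : g ≤ 1 := Int.ceil_le.mpr (by exact_mod_cast h)
        omega
      have hgle : (g : ℝ) - 1 ≤ deltak (d' + 1) ε (k' + 1) := by
        have := Int.ceil_lt_add_one (deltak (d' + 1) ε (k' + 1))
        rw [← hgdef] at this
        linarith
      calc (S : ℝ) * ((g : ℝ) - 1)
          ≤ sidel (d' + 1) ε (k' + 1) ^ ((1 : ℝ) / 3) * deltak (d' + 1) ε (k' + 1) := by
            apply mul_le_mul hSle hgle (by linarith) (Real.rpow_nonneg hl0.le _)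
        _ = ε / 4 * (sidel (d' + 1) ε (k' + 1) ^ ((1 : ℝ) / 3)
              * sidel (d' + 1) ε (k' + 1) ^ ((1 : ℝ) / 2)) := by
            rw [deltak, Real.sqrt_eq_rpow]; ring
        _ = ε / 4 * sidel (d' + 1) ε (k' + 1) ^ ((5 : ℝ) / 6) := by
            rw [← Real.rpow_add hl0]; norm_num
        _ ≤ ε / 4 * sidel (d' + 1) ε (k' + 1) := by
            have h56 : sidel (d' + 1) ε (k' + 1) ^ ((5 : ℝ) / 6)
                ≤ sidel (d' + 1) ε (k' + 1) ^ (1 : ℝ) :=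
              Real.rpow_le_rpow_of_exponent_le hl1 (by norm_num)
            rw [Real.rpow_one] at h56
            have : (0:ℝ) ≤ ε / 4 := by linarith
            exact mul_le_mul_of_nonneg_left h56 this
  set F : ℤ := ⌊sidel (d' + 1) ε (k' + 1)⌋ with hF
  have hFle : (F : ℝ) ≤ sidel (d' + 1) ε (k' + 1) := Int.floor_le _
  have hFlt : sidel (d' + 1) ε (k' + 1) < (F : ℝ) + 1 := Int.lt_floor_add_one _
  -- the key integer inequality
  have hkey : (b j0 - a j0) + (S : ℤ) * (g - 1) ≤ 2 * F + 1 := by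
    have hc : ((b j0 - a j0 + (S : ℤ) * (g - 1) : ℤ) : ℝ) < ((2 * F + 2 : ℤ) : ℝ) := by
      push_cast
      have h3 : (0 : ℝ) < ε * sidel (d' + 1) ε (k' + 1) := mul_pos hε0 hl0
      nlinarith
    have := Int.cast_lt.mp hc
    omega
  -- the cyclic permutation
  set σ : Equiv.Perm (Fin (d' + 1)) := (finRotate (d' + 1)).symm with hσdef
  have hσ : ∀ j : Fin (d' + 1), σ j = j - 1 := by
    intro j
    rw [hσdef, Equiv.symm_apply_eq, finRotate_succ_apply, sub_add_cancel]
  have hσ0 : σ 0 = Fin.last d' := by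
    rw [hσ]
    apply Fin.ext
    rw [Fin.coe_sub_one, if_pos rfl, Fin.val_last]
  have hσval : ∀ j : Fin (d' + 1), j ≠ 0 → ((σ j : Fin (d' + 1)) : ℕ) = (j : ℕ) - 1 := by
    intro j hj
    rw [hσ, Fin.coe_sub_one, if_neg hj]
  -- abbreviations for cut positions
  -- u i = b j0 - F + i*(g-1), t i = u i + (g-2)
  refine ⟨fun i => Λ.filter fun x => x j0 ≤ b j0 - F + ((i : ℕ) : ℤ) * (g - 1) + (g - 2),
          fun i => Λ.filter fun x => b j0 - F + ((i : ℕ) : ℤ) * (g - 1) ≤ x j0,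
          ?_, ?_, ?_, ?_⟩
  · -- memF for the pieces
    intro i
    have hiS : ((i : ℕ) : ℤ) ≤ (S : ℤ) - 1 := by
      have := i.isLt
      omega
    have hig : (0 : ℤ) ≤ ((i : ℕ) : ℤ) * (g - 1) :=
      mul_nonneg (by positivity) (by omega)
    have hti : b j0 - F + ((i : ℕ) : ℤ) * (g - 1) + (g - 2) ≤ a j0 + F := by
      have h2 : ((i : ℕ) : ℤ) * (g - 1) ≤ ((S : ℤ) - 1) * (g - 1) :=
        mul_le_mul_of_nonneg_right hiS (by omega)
      have h3 : ((S : ℤ) - 1) * (g - 1) = (S : ℤ) * (g - 1) - (g - 1) := by ring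
      omega
    constructor
    · -- Λ₁ i ∈ F_{k-1}
      refine ⟨⟨a, fun m => if m = j0
            then min (b m) (b j0 - F + ((i : ℕ) : ℤ) * (g - 1) + (g - 2)) else b m, by
          rw [hab]; exact rect_filter_le a b j0 _⟩,
        σ.trans π, fun m => if m = 0 then -(a j0) else v (σ m), ?_⟩
      intro x hx j
      obtain ⟨hxΛ, hxt⟩ := Finset.mem_filter.mp hx
      have hxm := (hmem x).mp hxΛ
      by_cases hj : j = 0
      · subst hj
        simp only [Equiv.trans_apply, hσ0, if_pos, ← hj0]
        constructor
        · have := (hxm j0).1; omega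
        · have hxF : x j0 + -(a j0) ≤ F := by omega
          have hxF' : ((x j0 + -(a j0) : ℤ) : ℝ) ≤ (F : ℝ) := by exact_mod_cast hxF
          have hidx : (k' + 1 + ((0 : Fin (d' + 1)) : ℕ)) = k' + 1 := by simp
          calc ((x j0 + -(a j0) : ℤ) : ℝ) ≤ (F : ℝ) := hxF'
            _ ≤ sidel (d' + 1) ε (k' + 1) := hFle
            _ = sidel (d' + 1) ε (k' + 1 + ((0 : Fin (d' + 1)) : ℕ)) := by rw [hidx]
      · have hjn : (j : ℕ) ≠ 0 := fun h => hj (Fin.ext h)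
        have hb' := hbox x hxΛ (σ j)
        simp only [Equiv.trans_apply, if_neg hj]
        refine ⟨hb'.1, ?_⟩
        have hidx : k' + 1 + 1 + ((σ j : Fin (d' + 1)) : ℕ) = k' + 1 + (j : ℕ) := by
          rw [hσval j hj]; omega
        rw [← hidx]
        exact hb'.2
    · -- Λ₂ i ∈ F_{k-1}
      refine ⟨⟨fun m => if m = j0
            then max (a m) (b j0 - F + ((i : ℕ) : ℤ) * (g - 1)) else a m, b, by
          rw [hab]; exact rect_filter_ge a b j0 _⟩,
        σ.trans π, fun m => if m = 0 then -(b j0 - F + ((i : ℕ) : ℤ) * (g - 1)) else v (σ m), ?_⟩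
      intro x hx j
      obtain ⟨hxΛ, hxu⟩ := Finset.mem_filter.mp hx
      have hxm := (hmem x).mp hxΛ
      by_cases hj : j = 0
      · subst hj
        simp only [Equiv.trans_apply, hσ0, if_pos, ← hj0]
        constructor
        · omega
        · have hxF : x j0 + -(b j0 - F + ((i : ℕ) : ℤ) * (g - 1)) ≤ F := by
            have := (hxm j0).2; omega
          have hxF' : ((x j0 + -(b j0 - F + ((i : ℕ) : ℤ) * (g - 1)) : ℤ) : ℝ) ≤ (F : ℝ) := by
            exact_mod_cast hxF
          have hidx : (k' + 1 + ((0 : Fin (d' + 1)) : ℕ)) = k' + 1 := by simp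
          calc ((x j0 + -(b j0 - F + ((i : ℕ) : ℤ) * (g - 1)) : ℤ) : ℝ) ≤ (F : ℝ) := hxF'
            _ ≤ sidel (d' + 1) ε (k' + 1) := hFle
            _ = sidel (d' + 1) ε (k' + 1 + ((0 : Fin (d' + 1)) : ℕ)) := by rw [hidx]
      · have hjn : (j : ℕ) ≠ 0 := fun h => hj (Fin.ext h)
        have hb' := hbox x hxΛ (σ j)
        simp only [Equiv.trans_apply, if_neg hj]
        refine ⟨hb'.1, ?_⟩
        have hidx : k' + 1 + 1 + ((σ j : Fin (d' + 1)) : ℕ) = k' + 1 + (j : ℕ) := by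
          rw [hσval j hj]; omega
        rw [← hidx]
        exact hb'.2
  · -- union
    intro i
    ext x
    simp only [Finset.mem_union, Finset.mem_filter]
    constructor
    · intro hx
      rcases le_or_gt (x j0) (b j0 - F + ((i : ℕ) : ℤ) * (g - 1) + (g - 2)) with h | h
      · exact Or.inl ⟨hx, h⟩
      · exact Or.inr ⟨hx, by omega⟩
    · rintro (⟨h, -⟩ | ⟨h, -⟩) <;> exact h
  · -- distance
    intro i x hx y hy
    obtain ⟨hx1, hx2⟩ := Finset.mem_sdiff.mp hx
    obtain ⟨hy1, hy2⟩ := Finset.mem_sdiff.mp hy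
    have hxg : b j0 - F + ((i : ℕ) : ℤ) * (g - 1) + (g - 2) < x j0 := by
      by_contra h
      push_neg at h
      exact hx2 (Finset.mem_filter.mpr ⟨hx1, h⟩)
    have hyl : y j0 < b j0 - F + ((i : ℕ) : ℤ) * (g - 1) := by
      by_contra h
      push_neg at h
      exact hy2 (Finset.mem_filter.mpr ⟨hy1, h⟩)
    have hgap : (g : ℤ) ≤ x j0 - y j0 := by omega
    have hgap' : (g : ℝ) ≤ ((x j0 : ℤ) : ℝ) - ((y j0 : ℤ) : ℝ) := by
      have : ((g : ℤ) : ℝ) ≤ ((x j0 - y j0 : ℤ) : ℝ) := by exact_mod_cast hgap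
      push_cast at this
      linarith
    calc deltak (d' + 1) ε (k' + 1) ≤ (g : ℝ) := hgδ
      _ ≤ ((x j0 : ℤ) : ℝ) - ((y j0 : ℤ) : ℝ) := hgap'
      _ ≤ |((x j0 : ℤ) : ℝ) - ((y j0 : ℤ) : ℝ)| := le_abs_self _
      _ ≤ euclDist x y := euclDist_coord_le x y j0
  · -- disjoint overlaps
    intro i j hij
    have key : ∀ p q : Fin S, (p : ℕ) < (q : ℕ) → ∀ x : Site (d' + 1),
        x j0 ≤ b j0 - F + ((p : ℕ) : ℤ) * (g - 1) + (g - 2) →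
        b j0 - F + ((q : ℕ) : ℤ) * (g - 1) ≤ x j0 → False := by
      intro p q hpq x h1 h2
      have hq : ((p : ℕ) : ℤ) + 1 ≤ ((q : ℕ) : ℤ) := by exact_mod_cast hpq
      have hmul : (1 : ℤ) * (g - 1) ≤ (((q : ℕ) : ℤ) - ((p : ℕ) : ℤ)) * (g - 1) :=
        mul_le_mul_of_nonneg_right (by omega) (by omega)
      have hexp : (((q : ℕ) : ℤ) - ((p : ℕ) : ℤ)) * (g - 1)
          = ((q : ℕ) : ℤ) * (g - 1) - ((p : ℕ) : ℤ) * (g - 1) := by ring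
      omega
    rw [Finset.eq_empty_iff_forall_notMem]
    intro x hx
    obtain ⟨hxi, hxj⟩ := Finset.mem_inter.mp hx
    obtain ⟨hxi1, hxi2⟩ := Finset.mem_inter.mp hxi
    obtain ⟨hxj1, hxj2⟩ := Finset.mem_inter.mp hxj
    have h1 := (Finset.mem_filter.mp hxi1).2
    have h2 := (Finset.mem_filter.mp hxi2).2
    have h3 := (Finset.mem_filter.mp hxj1).2
    have h4 := (Finset.mem_filter.mp hxj2).2
    have hne' : (i : ℕ) ≠ (j : ℕ) := fun h => hij (Fin.ext h)
    rcases Nat.lt_or_ge (i : ℕ) (j : ℕ) with h | h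
    · exact key i j h x h1 h4
    · exact key j i (by omega) x h3 h2

end
end

section
/- For every real x ≥ 0 and every integer m ≥ 1: e^x − Σ_{k=0}^{m} x^k/k! ≤ (x e / m)^m · e^x. -/
open Real
open scoped BigOperators

lemma pow_div_factorial_le_exp' (x : ℝ) (hx : 0 ≤ x) (n : ℕ) :
    x ^ n / n.factorial ≤ Real.exp x := by
  calc x ^ n / n.factorial
      ≤ ∑ i ∈ Finset.range (n + 1), x ^ i / i.factorial := by
        exact Finset.single_le_sum (f := fun i => x ^ i / (i.factorial : ℝ))
          (fun i _ => by positivity) (Finset.self_mem_range_succ n)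
    _ ≤ Real.exp x := Real.sum_le_exp_of_nonneg hx _

lemma pow_self_le_factorial_mul (m : ℕ) :
    (m : ℝ) ^ m ≤ m.factorial * Real.exp 1 ^ m := by
  have h := pow_div_factorial_le_exp' (m : ℝ) (by positivity) m
  rw [Real.exp_one_pow]
  rw [div_le_iff₀ (by positivity)] at h
  linarith [h]

lemma real_exp_eq_tsum (x : ℝ) : Real.exp x = ∑' n : ℕ, x ^ n / n.factorial := by
  rw [Real.exp_eq_exp_ℝ, NormedSpace.exp_eq_tsum_div]

/-- For `x ≥ 0` and `m ≥ 1`: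
`e^x - Σ_{k=0}^m x^k/k! ≤ (x e / m)^m e^x`. -/
theorem exp_tail_le (x : ℝ) (hx : 0 ≤ x) (m : ℕ) (hm : 1 ≤ m) :
    Real.exp x - ∑ k ∈ Finset.range (m + 1), x ^ k / (Nat.factorial k) ≤
      (x * Real.exp 1 / m) ^ m * Real.exp x := by
  have hmpos : (0 : ℝ) < m := by exact_mod_cast hm
  set f : ℕ → ℝ := fun n => x ^ n / n.factorial with hf
  have hsum : Summable f := Real.summable_pow_div_factorial x
  have hsum1 : Summable fun k => f (k + 1) := (summable_nat_add_iff 1).mpr hsum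
  have htail : Real.exp x - ∑ k ∈ Finset.range (m + 1), f k = ∑' k, f (k + (m + 1)) := by
    rw [real_exp_eq_tsum x, ← Summable.sum_add_tsum_nat_add (m + 1) hsum]
    ring
  have hterm : ∀ k, f (k + (m + 1)) ≤ x ^ m / m.factorial * f (k + 1) := by
    intro k
    have hfac : (m.factorial * (k + 1).factorial : ℝ) ≤ ((k + (m + 1)).factorial : ℝ) := by
      have := Nat.factorial_mul_factorial_dvd_factorial_add m (k + 1)
      have h2 := Nat.le_of_dvd (Nat.factorial_pos _) this
      have : m + (k + 1) = k + (m + 1) := by ring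
      rw [this] at h2
      exact_mod_cast h2
    have hxpow : x ^ (k + (m + 1)) = x ^ m * x ^ (k + 1) := by
      rw [← pow_add]; ring_nf
    simp only [hf, hxpow, div_mul_div_comm]
    apply div_le_div_of_nonneg_left (by positivity) (by positivity) hfac
  have hbound : ∑' k, f (k + (m + 1)) ≤ x ^ m / m.factorial * Real.exp x := by
    calc ∑' k, f (k + (m + 1))
        ≤ ∑' k, x ^ m / m.factorial * f (k + 1) :=
          Summable.tsum_le_tsum hterm ((summable_nat_add_iff (m + 1)).mpr hsum) (hsum1.mul_left _)
      _ = x ^ m / m.factorial * ∑' k, f (k + 1) := tsum_mul_left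
      _ ≤ x ^ m / m.factorial * Real.exp x := by
          apply mul_le_mul_of_nonneg_left _ (by positivity)
          have h0 : f 0 + ∑' k, f (k + 1) = ∑' n, f n := by
            have := Summable.sum_add_tsum_nat_add 1 hsum
            simpa using this
          have hf0 : f 0 = 1 := by simp [hf]
          rw [← real_exp_eq_tsum x] at h0
          linarith
  have hkey : x ^ m / m.factorial ≤ (x * Real.exp 1 / m) ^ m := by
    rw [div_pow, mul_pow]
    rw [div_le_div_iff₀ (by positivity) (by positivity)]
    calc x ^ m * (m : ℝ) ^ m ≤ x ^ m * (m.factorial * Real.exp 1 ^ m) := by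
          apply mul_le_mul_of_nonneg_left (pow_self_le_factorial_mul m) (by positivity)
      _ = x ^ m * Real.exp 1 ^ m * m.factorial := by ring
  calc Real.exp x - ∑ k ∈ Finset.range (m + 1), f k = ∑' k, f (k + (m + 1)) := htail
    _ ≤ x ^ m / m.factorial * Real.exp x := hbound
    _ ≤ (x * Real.exp 1 / m) ^ m * Real.exp x :=
        mul_le_mul_of_nonneg_right hkey (Real.exp_nonneg x)
end
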